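/- Let σ ∈ Stmt^ω, X ∈ (2^{ρ∪υ})^ω and ζ a computation with ζ ◁ combine(σ, X). Then ζ equals the adapted computation of its reduction, i.e. ζ = (ζ|σ)~, the adapted computation built from ζ|σ. -/

import Mathlib

namespace TSLMC

open scoped Classical

/-! ### Theories, function terms, assignments -/

/-- A theory: interpretation of function symbols, plus distinguished values true/false. -/
structure Thy (V F : Type) where
  ε : F → List V → V
  vtrue : V
  vfalse : V

/-- Function terms over inputs `I`, cells `C` and function symbols `F`. -/
inductive FTerm (I C F : Type) : Type where
  | inp  : I → FTerm I C F
  | cell : C → FTerm I C F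
  | app  : F → List (FTerm I C F) → FTerm I C F

/-- An assignment gives values to inputs and cells. -/
abbrev Assign (V I C : Type) := I ⊕ C → V

variable {V I C F Pi : Type}

/-- Evaluation of a function term under an assignment. -/
def FTerm.eval (T : Thy V F) (a : Assign V I C) : FTerm I C F → V
  | .inp i => a (.inl i)
  | .cell c => a (.inr c)
  | .app f ts => T.ε f (ts.attach.map fun t => t.1.eval T a)
decreasing_by
  have := List.sizeOf_lt_of_mem t.2
  simp only [FTerm.app.sizeOf_spec]
  omega

/-- A predicate term is a function term evaluating only to true or false. -/
def IsPredTerm (T : Thy V F) (τ : FTerm I C F) : Prop :=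
  ∀ a : Assign V I C, τ.eval T a = T.vtrue ∨ τ.eval T a = T.vfalse

/-- The theory contains (at least) equality, negation, conjunction and a true constant,
with their usual interpretations, and true ≠ false. -/
structure Ops (V F : Type) (T : Thy V F) where
  feq : F
  fneg : F
  fand : F
  ftrue : F
  heq : ∀ x y : V, T.ε feq [x, y] = if x = y then T.vtrue else T.vfalse
  hneg : ∀ x : V, T.ε fneg [x] = if x = T.vtrue then T.vfalse else T.vtrue
  hand : ∀ x y : V, T.ε fand [x, y] = if x = T.vtrue ∧ y = T.vtrue then T.vtrue else T.vfalse
  htrue : T.ε ftrue [] = T.vtrue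
  tne : T.vtrue ≠ T.vfalse

/-! ### TSL(T) formulas -/

/-- TSL(T) formulas (atoms: predicate terms and update terms `⟦c ↞ τ⟧`). -/
inductive TSL (I C F : Type) : Type where
  | pred : FTerm I C F → TSL I C F
  | upd  : C → FTerm I C F → TSL I C F
  | not  : TSL I C F → TSL I C F
  | and  : TSL I C F → TSL I C F → TSL I C F
  | next : TSL I C F → TSL I C F
  | untl : TSL I C F → TSL I C F → TSL I C F

/-- `prevA init ζ t` is `ζ (t-1)`, with the fixed initial assignment at `t = 0`. -/
def prevA (init : Assign V I C) (ζ : ℕ → Assign V I C) : ℕ → Assign V I C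
  | 0 => init
  | t + 1 => ζ t

/-- Satisfaction of a TSL(T) formula over a computation at a time point. -/
def TSL.sat (T : Thy V F) (init : Assign V I C) (ζ : ℕ → Assign V I C) :
    TSL I C F → ℕ → Prop
  | .pred τ, t => τ.eval T (ζ t) = T.vtrue
  | .upd c τ, t => τ.eval T (prevA init ζ t) = ζ t (.inr c)
  | .not φ, t => ¬ φ.sat T init ζ t
  | .and φ ψ, t => φ.sat T init ζ t ∧ ψ.sat T init ζ t
  | .next φ, t => φ.sat T init ζ (t + 1)
  | .untl φ ψ, t => ∃ t', t ≤ t' ∧ ψ.sat T init ζ t' ∧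
      ∀ t'', t ≤ t'' → t'' < t' → φ.sat T init ζ t''

/-- The list of predicate terms appearing in a TSL(T) formula. -/
def TSL.predList : TSL I C F → List (FTerm I C F)
  | .pred τ => [τ]
  | .upd _ _ => []
  | .not φ => φ.predList
  | .and φ ψ => φ.predList ++ ψ.predList
  | .next φ => φ.predList
  | .untl φ ψ => φ.predList ++ ψ.predList

/-- The list of update terms appearing in a TSL(T) formula. -/
def TSL.updList : TSL I C F → List (C × FTerm I C F)
  | .pred _ => []
  | .upd c τ => [(c, τ)]
  | .not φ => φ.updList
  | .and φ ψ => φ.updList ++ ψ.updList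
  | .next φ => φ.updList
  | .untl φ ψ => φ.updList ++ ψ.updList

/-! ### LTL -/

/-- LTL formulas over atomic propositions `A`. -/
inductive LTL (A : Type) : Type where
  | atom : A → LTL A
  | not : LTL A → LTL A
  | and : LTL A → LTL A → LTL A
  | next : LTL A → LTL A
  | untl : LTL A → LTL A → LTL A

/-- Standard LTL satisfaction over words of sets of atomic propositions. -/
def LTL.sat (w : ℕ → Set A) : LTL A → ℕ → Prop
  | .atom a, t => a ∈ w t
  | .not φ, t => ¬ φ.sat w t
  | .and φ ψ, t => φ.sat w t ∧ ψ.sat w t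
  | .next φ, t => φ.sat w (t + 1)
  | .untl φ ψ, t => ∃ t', t ≤ t' ∧ ψ.sat w t' ∧ ∀ t'', t ≤ t'' → t'' < t' → φ.sat w t''

/-- Atomic propositions: predicate terms and update terms. -/
abbrev AP (I C F : Type) := FTerm I C F ⊕ (C × FTerm I C F)

/-- The LTL formula obtained from a TSL(T) formula by treating predicate and
update terms as atomic propositions. -/
def TSL.toLTL : TSL I C F → LTL (AP I C F)
  | .pred τ => .atom (.inl τ)
  | .upd c τ => .atom (.inr (c, τ))
  | .not φ => .not φ.toLTL
  | .and φ ψ => .and φ.toLTL ψ.toLTL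
  | .next φ => .next φ.toLTL
  | .untl φ ψ => .untl φ.toLTL ψ.toLTL

/-- `SeqW T init ζ ρ υ t` is the set of predicate terms of `ρ` and update terms of `υ`
that hold at time `t` of the computation `ζ`. -/
def SeqW (T : Thy V F) (init : Assign V I C) (ζ : ℕ → Assign V I C)
    (ρ : Set (FTerm I C F)) (υ : Set (C × FTerm I C F)) : ℕ → Set (AP I C F) :=
  fun t => {a | Sum.elim
    (fun τ => τ ∈ ρ ∧ TSL.sat T init ζ (.pred τ) t)
    (fun u => u ∈ υ ∧ TSL.sat T init ζ (.upd u.1 u.2) t) a}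

/-! ### Program statements, matching, feasibility -/

/-- Basic program statements. -/
inductive Stmt0 (I C F : Type) : Type where
  | assert : FTerm I C F → Stmt0 I C F
  | assign : C → FTerm I C F → Stmt0 I C F
  | havoc : C → Stmt0 I C F

/-- Program statements: nonempty finite sequences of basic statements. -/
abbrev Stmt (I C F : Type) := {l : List (Stmt0 I C F) // l ≠ []}

/-- A computation matches a trace of basic statements at time `t`. -/
def matchesAt (T : Thy V F) (init : Assign V I C) (ζ : ℕ → Assign V I C)
    (σ : ℕ → Stmt0 I C F) (t : ℕ) : Prop :=
  match σ t with
  | .assert τ => τ.eval T (prevA init ζ t) = T.vtrue ∧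
      ∀ c : C, ζ t (.inr c) = prevA init ζ t (.inr c)
  | .assign c τ => ζ t (.inr c) = τ.eval T (prevA init ζ t) ∧
      ∀ c', c' ≠ c → ζ t (.inr c') = prevA init ζ t (.inr c')
  | .havoc c => ∀ c', c' ≠ c → ζ t (.inr c') = prevA init ζ t (.inr c')

/-- A computation matches a trace of basic statements. -/
def Matches (T : Thy V F) (init : Assign V I C) (ζ : ℕ → Assign V I C)
    (σ : ℕ → Stmt0 I C F) : Prop :=
  ∀ t, matchesAt T init ζ σ t

/-- Position (index of the statement, offset inside it) of the `j`-th basic statement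
in the flattening of a trace of composed statements. -/
def fpos (σ : ℕ → Stmt I C F) : ℕ → ℕ × ℕ
  | 0 => (0, 0)
  | j + 1 =>
    let p := fpos σ j
    if p.2 + 1 < ((σ p.1).1).length then (p.1, p.2 + 1) else (p.1 + 1, 0)

/-- The flattening of a trace of composed statements into basic statements. -/
def flatten (σ : ℕ → Stmt I C F) (j : ℕ) : Stmt0 I C F :=
  ((σ (fpos σ j).1).1).getD (fpos σ j).2 (((σ (fpos σ j).1).1).head (σ (fpos σ j).1).2)

/-- A computation matches a trace of composed statements (via its flattening). -/
def MatchesC (T : Thy V F) (init : Assign V I C) (ζ : ℕ → Assign V I C)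
    (σ : ℕ → Stmt I C F) : Prop :=
  Matches T init ζ (flatten σ)

/-- A trace of composed statements is feasible if some computation matches it. -/
def Feasible (T : Thy V F) (init : Assign V I C) (σ : ℕ → Stmt I C F) : Prop :=
  ∃ ζ, MatchesC T init ζ σ

/-- A trace of basic statements is feasible if some computation matches it. -/
def Feasible0 (T : Thy V F) (init : Assign V I C) (σ : ℕ → Stmt0 I C F) : Prop :=
  ∃ ζ, Matches T init ζ σ

/-! ### Büchi automata -/

/-- A Büchi automaton. -/
structure Buchi (A : Type) (Q : Type) where
  q0 : Q
  δ : Q → A → Q → Prop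
  Acc : Set Q

/-- A run of a Büchi automaton on a word. -/
def Buchi.IsRun {A Q : Type} (B : Buchi A Q) (σ : ℕ → A) (r : ℕ → Q) : Prop :=
  r 0 = B.q0 ∧ ∀ t, B.δ (r t) (σ t) (r (t + 1))

/-- Büchi acceptance: some run visits accepting states infinitely often. -/
def Buchi.Accepts {A Q : Type} (B : Buchi A Q) (σ : ℕ → A) : Prop :=
  ∃ r, B.IsRun σ r ∧ ∀ n, ∃ m, n ≤ m ∧ r m ∈ B.Acc

/-- A program automaton over basic statements satisfies a TSL(T) formula if every
computation matching an accepted trace satisfies the formula. -/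
def SatisfiesTSL {Qp : Type} (T : Thy V F) (init : Assign V I C)
    (P : Buchi (Stmt0 I C F) Qp) (φ : TSL I C F) : Prop :=
  ∀ σ, P.Accepts σ → ∀ ζ, Matches T init ζ σ → φ.sat T init ζ 0

/-! ### The combine construction and the Büchi program product -/

/-- Extended cell set: original cells, inputs-as-cells, and fresh `tmp` cells. -/
abbrev CStar (I C : Type) := (C ⊕ I) ⊕ ℕ

/-- Embedding of terms over inputs/cells into terms over the extended cell set. -/
def FTerm.embed : FTerm I C F → FTerm Empty (CStar I C) F
  | .inp i => .cell (.inl (.inr i))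
  | .cell c => .cell (.inl (.inl c))
  | .app f ts => .app f (ts.attach.map fun t => t.1.embed)
decreasing_by
  have := List.sizeOf_lt_of_mem t.2
  simp only [FTerm.app.sizeOf_spec]
  omega

/-- Embedding of basic statements into statements over the extended cell set. -/
def Stmt0.embed : Stmt0 I C F → Stmt0 Empty (CStar I C) F
  | .assert τ => .assert τ.embed
  | .assign c τ => .assign (.inl (.inl c)) τ.embed
  | .havoc c => .havoc (.inl (.inl c))

/-- Conjunction of a list of terms (via the theory's conjunction symbol). -/
def conjTerm (T : Thy V F) (O : Ops V F T) :
    List (FTerm Empty (CStar I C) F) → FTerm Empty (CStar I C) F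
  | [] => .app O.ftrue []
  | τ :: ts => .app O.fand [τ, conjTerm T O ts]

/-- The `combine` construction: `save_values; s; new_inputs; check_preds_l; check_updates_l`. -/
noncomputable def combine (T : Thy V F) (O : Ops V F T) (ρ : List (FTerm I C F))
    (υ : List (C × FTerm I C F)) (inps : List I)
    (s : List (Stmt0 I C F)) (l : Set (AP I C F)) : Stmt Empty (CStar I C) F :=
  ⟨(υ.mapIdx fun j u => Stmt0.assign (Sum.inr j) u.2.embed)
    ++ s.map Stmt0.embed
    ++ (inps.map fun i => Stmt0.havoc (Sum.inl (Sum.inr i)))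
    ++ [Stmt0.assert (conjTerm T O
          (ρ.map fun τ => if Sum.inl τ ∈ l then τ.embed else .app O.fneg [τ.embed])),
        Stmt0.assert (conjTerm T O
          (υ.mapIdx fun j u =>
            let eqt : FTerm Empty (CStar I C) F :=
              .app O.feq [.cell (Sum.inl (Sum.inl u.1)), .cell (Sum.inr j)]
            if Sum.inr u ∈ l then eqt else .app O.fneg [eqt]))],
    by simp⟩

/-- Lifting an automaton over basic statements to an automaton over (composed) statements. -/
def liftB {Qp : Type} (P : Buchi (Stmt0 I C F) Qp) : Buchi (Stmt I C F) Qp where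
  q0 := P.q0
  δ := fun q w q' => ∃ s, P.δ q s q' ∧ w = ⟨[s], by simp⟩
  Acc := P.Acc

/-- The combined product `P ⊗ A` of a program automaton and a Büchi automaton over
sets of predicate/update terms. -/
noncomputable def product {Qp Qa : Type} (T : Thy V F) (O : Ops V F T)
    (P : Buchi (Stmt I C F) Qp) (A : Buchi (Set (AP I C F)) Qa)
    (ρ : List (FTerm I C F)) (υ : List (C × FTerm I C F)) (inps : List I) :
    Buchi (Stmt Empty (CStar I C) F) (Qp × Qa) where
  q0 := (P.q0, A.q0)
  δ := fun x w y => ∃ s l, P.δ x.1 s y.1 ∧ A.δ x.2 l y.2 ∧ w = combine T O ρ υ inps s.1 l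
  Acc := {x | x.2 ∈ A.Acc}

/-! ### HyperTSL(T) -/

/-- HyperTSL(T) formulas: a quantifier prefix over trace variables, followed by a
quantifier-free formula over trace-indexed inputs and cells. -/
inductive HyperTSL (I C F Pi : Type) : Type where
  | qf : TSL (I × Pi) (C × Pi) F → HyperTSL I C F Pi
  | all : Pi → HyperTSL I C F Pi → HyperTSL I C F Pi
  | ex : Pi → HyperTSL I C F Pi → HyperTSL I C F Pi

/-- Extension `ζ̂[π, ζ]` of a hyper-computation by a computation for trace variable `π`. -/
noncomputable def extendH (ζh : ℕ → Assign V (I × Pi) (C × Pi)) (π : Pi)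
    (ζ : ℕ → Assign V I C) : ℕ → Assign V (I × Pi) (C × Pi) :=
  fun t x =>
    match x with
    | .inl (i, π') => if π' = π then ζ t (.inl i) else ζh t (.inl (i, π'))
    | .inr (c, π') => if π' = π then ζ t (.inr c) else ζh t (.inr (c, π'))

/-- Satisfaction of a HyperTSL(T) formula. -/
noncomputable def HyperTSL.sat (T : Thy V F) (init : Assign V (I × Pi) (C × Pi))
    (Z : Set (ℕ → Assign V I C)) :
    HyperTSL I C F Pi → (ℕ → Assign V (I × Pi) (C × Pi)) → ℕ → Prop
  | .qf ψ, ζh, t => ψ.sat T init ζh t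
  | .all π φ, ζh, t => ∀ ζ ∈ Z, φ.sat T init Z (extendH ζh π ζ) t
  | .ex π φ, ζh, t => ∃ ζ ∈ Z, φ.sat T init Z (extendH ζh π ζ) t

/-- Lift an assignment to a hyper-assignment (every trace gets the same values). -/
def liftInit (init : Assign V I C) : Assign V (I × Pi) (C × Pi) :=
  fun x => match x with
  | .inl (i, _) => init (.inl i)
  | .inr (c, _) => init (.inr c)

/-- The set of computations matching accepted traces of a program automaton. -/
def Zof {Qp : Type} (T : Thy V F) (init : Assign V I C)
    (P : Buchi (Stmt0 I C F) Qp) : Set (ℕ → Assign V I C) :=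
  {ζ | ∃ σ, P.Accepts σ ∧ Matches T init ζ σ}

/-- A program automaton satisfies a HyperTSL(T) formula. -/
noncomputable def SatisfiesHyper {Qp : Type} (T : Thy V F) (init : Assign V I C)
    (P : Buchi (Stmt0 I C F) Qp) (φ : HyperTSL I C F Pi) : Prop :=
  φ.sat T (liftInit init) (Zof T init P) (fun _ => liftInit init) 0

/-- Renaming of terms: cell `c` becomes `c_π`, input `i` becomes `i_π`. -/
def FTerm.rename (π : Pi) : FTerm I C F → FTerm (I × Pi) (C × Pi) F
  | .inp i => .inp (i, π)
  | .cell c => .cell (c, π)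
  | .app f ts => .app f (ts.attach.map fun t => t.1.rename π)
decreasing_by
  have := List.sizeOf_lt_of_mem t.2
  simp only [FTerm.app.sizeOf_spec]
  omega

/-- Renaming of basic statements to a trace variable. -/
def Stmt0.rename (π : Pi) : Stmt0 I C F → Stmt0 (I × Pi) (C × Pi) F
  | .assert τ => .assert (τ.rename π)
  | .assign c τ => .assign (c, π) (τ.rename π)
  | .havoc c => .havoc (c, π)

/-- The `n`-fold self-composition of a program automaton. -/
def selfComp {Qp : Type} (P : Buchi (Stmt0 I C F) Qp) (n : ℕ) :
    Buchi (Stmt (I × Fin n) (C × Fin n) F) (Fin n → Qp) where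
  q0 := fun _ => P.q0
  δ := fun q w q' => ∃ ss : Fin n → Stmt0 I C F,
        (∀ j, P.δ (q j) (ss j) (q' j)) ∧
        w.1 = (List.finRange n).map fun j => (ss j).rename j
  Acc := Set.univ

/-- The `m`-fold self-composition, using the first `m` of `n` trace variables. -/
def selfCompInto {Qp : Type} (P : Buchi (Stmt0 I C F) Qp) (m n : ℕ) (h : m ≤ n) :
    Buchi (Stmt (I × Fin n) (C × Fin n) F) (Fin m → Qp) where
  q0 := fun _ => P.q0
  δ := fun q w q' => ∃ ss : Fin m → Stmt0 I C F,
        (∀ j, P.δ (q j) (ss j) (q' j)) ∧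
        w.1 = (List.finRange m).map fun j => (ss j).rename (Fin.castLE h j)
  Acc := Set.univ

end TSLMC

/-! ### k-feasibility and the automaton `P_k` -/

namespace TSLMC
open scoped Classical
variable {V I C F Pi : Type}

/-- The statement `assert(true)`. -/
def trueStmt (T : Thy V F) (O : Ops V F T) : Stmt I C F :=
  ⟨[.assert (.app O.ftrue [])], by simp⟩

/-- Extend a finite window of statements by `assert(true)^ω`. -/
def extendTrue (T : Thy V F) (O : Ops V F T) (ss : List (Stmt I C F)) : ℕ → Stmt I C F :=
  fun t => if h : t < ss.length then ss.get ⟨t, h⟩ else trueStmt T O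

/-- A finite window of statements is feasible if, followed by `assert(true)^ω`, it is
feasible for some initial assignment. -/
def WinFeasible (T : Thy V F) (O : Ops V F T) (ss : List (Stmt I C F)) : Prop :=
  ∃ init : Assign V I C, Feasible T init (extendTrue T O ss)

/-- The window `σ_j … σ_{j+k-1}` of a trace. -/
def window (σ : ℕ → α) (j k : ℕ) : List α :=
  (List.range k).map fun i => σ (j + i)

/-- A trace is `k`-feasible if no window of `k` consecutive statements is infeasible
for all initial assignments. -/
def KFeasible (T : Thy V F) (O : Ops V F T) (k : ℕ) (σ : ℕ → Stmt I C F) : Prop :=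
  ∀ j, WinFeasible T O (window σ j k)

/-- Chains of transitions of an automaton. -/
def chain {S Qp : Type} (P : Buchi S Qp) : Qp → List (S × Qp) → Prop
  | _, [] => True
  | q, (s, q') :: rest => P.δ q s q' ∧ chain P q' rest

/-- The last state of an alternating state/statement sequence. -/
def lastQ {S Qp : Type} (st : Qp × List (S × Qp)) : Qp :=
  (st.2.getLast?).elim st.1 Prod.snd

/-- The statements of an alternating state/statement sequence. -/
def stmts {S Qp : Type} (st : Qp × List (S × Qp)) : List S :=
  st.2.map Prod.fst

/-- Valid states of `P_k`: chains of transitions of `P` of length `k-1`, or shorter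
ones starting at the initial state. -/
def ValidSt {S Qp : Type} (P : Buchi S Qp) (k : ℕ) (st : Qp × List (S × Qp)) : Prop :=
  chain P st.1 st.2 ∧ (st.2.length = k - 1 ∨ (st.2.length < k - 1 ∧ st.1 = P.q0))

/-- Extend an alternating sequence by a transition, dropping the first entry if the
window is full. -/
def push {S Qp : Type} (k : ℕ) (st : Qp × List (S × Qp)) (s : S) (q' : Qp) :
    Qp × List (S × Qp) :=
  let l' := st.2 ++ [(s, q')]
  if k ≤ l'.length then
    match l' with
    | [] => (st.1, [])
    | e :: rest => (e.2, rest)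
  else (st.1, l')

/-- The automaton `P_k`: `P` without `k`-infeasibility. -/
def Pk {Qp : Type} (T : Thy V F) (O : Ops V F T) (P : Buchi (Stmt I C F) Qp) (k : ℕ) :
    Buchi (Stmt I C F) (Qp × List (Stmt I C F × Qp)) where
  q0 := (P.q0, [])
  δ := fun st s st' => ValidSt P k st ∧ ValidSt P k st' ∧
        ∃ q', P.δ (lastQ st) s q' ∧ WinFeasible T O (stmts st ++ [s]) ∧ st' = push k st s q'
  Acc := {st | lastQ st ∈ P.Acc}

/-! ### Infeasible accepting cycles and their removal -/

/-- The trace `(s₁ … s_n)^ω` of a cycle. -/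
def cycTrace (T : Thy V F) (O : Ops V F T) {Qp : Type}
    (ϱ : List (Qp × Stmt I C F × Qp)) : ℕ → Stmt I C F :=
  fun t => ((ϱ[t % ϱ.length]?).map fun e => e.2.1).getD (trueStmt T O)

/-- `ϱ` is a cycle of transitions of `B`. -/
def IsCycle {S Qp : Type} (B : Buchi S Qp) (ϱ : List (Qp × S × Qp)) : Prop :=
  ϱ ≠ [] ∧ (∀ e ∈ ϱ, B.δ e.1 e.2.1 e.2.2) ∧
  (∀ i, (h : i + 1 < ϱ.length) →
    (ϱ.get ⟨i + 1, h⟩).1 = (ϱ.get ⟨i, Nat.lt_of_succ_lt h⟩).2.2) ∧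
  ∀ h : ϱ ≠ [], (ϱ.getLast h).2.2 = (ϱ.head h).1

/-- An infeasible accepting cycle. -/
def InfAccCycle {Qp : Type} (T : Thy V F) (O : Ops V F T)
    (B : Buchi (Stmt I C F) Qp) (ϱ : List (Qp × Stmt I C F × Qp)) : Prop :=
  IsCycle B ϱ ∧ (∃ e ∈ ϱ, e.1 ∈ B.Acc) ∧
  ∀ init : Assign V I C, ¬ Feasible T init (cycTrace T O ϱ)

/-- A trace ends with the infinite repetition of the statements of the cycle `ϱ`. -/
def EndsWithCyc {Qp : Type} (T : Thy V F) (O : Ops V F T)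
    (σ : ℕ → Stmt I C F) (ϱ : List (Qp × Stmt I C F × Qp)) : Prop :=
  ∃ N, ∀ j, σ (N + j) = cycTrace T O ϱ j

/-- The automaton `A_ϱ`, accepting exactly the traces ending with `ϱ^ω`. -/
def cycAut {Qp : Type} (ϱ : List (Qp × Stmt I C F × Qp)) :
    Buchi (Stmt I C F) (Option (Fin ϱ.length)) where
  q0 := none
  δ := fun st s st' =>
    match st with
    | none => st' = none ∨ ∃ h : ϱ ≠ [],
        s = (ϱ.head h).2.1 ∧
        st' = some ⟨1 % ϱ.length, Nat.mod_lt _ (List.length_pos_iff.mpr h)⟩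
    | some i => s = (ϱ.get i).2.1 ∧
        st' = some ⟨((i : ℕ) + 1) % ϱ.length,
          Nat.mod_lt _ (Nat.lt_of_le_of_lt (Nat.zero_le _) i.isLt)⟩
  Acc := {st | st ≠ none}

/-- A Büchi automaton bundled with its state type. -/
structure BAut (A : Type) : Type 1 where
  Q : Type
  B : Buchi A Q

/-- One removal step: remove (the languages of the automata `A_ϱ` for) a set of
infeasible accepting cycles from an automaton. -/
def RemStep (T : Thy V F) (O : Ops V F T) (x y : BAut (Stmt I C F)) : Prop :=
  ∃ Cset : Set (List (x.Q × Stmt I C F × x.Q)),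
    (∀ ϱ ∈ Cset, InfAccCycle T O x.B ϱ) ∧
    ∀ σ, y.B.Accepts σ ↔ (x.B.Accepts σ ∧ ∀ ϱ ∈ Cset, ¬ EndsWithCyc T O σ ϱ)

/-- `k'` iterations of removing infeasible accepting cycles. -/
def RemChain (T : Thy V F) (O : Ops V F T) :
    ℕ → BAut (Stmt I C F) → BAut (Stmt I C F) → Prop
  | 0, x, y => y = x
  | k' + 1, x, y => ∃ z, RemChain T O k' x z ∧ RemStep T O z y

/-- The universal projection of (a refinement of) the combined product: keep the first
`m` of the `n` statements of each `combine`-labelled transition. -/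
noncomputable def projU {Q' : Type} (T : Thy V F) (O : Ops V F T) {m n : ℕ}
    (_hm : 0 < m) (hmn : m ≤ n)
    (ρ : List (FTerm (I × Fin n) (C × Fin n) F))
    (υ : List ((C × Fin n) × FTerm (I × Fin n) (C × Fin n) F))
    (inps : List (I × Fin n))
    (B : Buchi (Stmt Empty (CStar (I × Fin n) (C × Fin n)) F) Q') :
    Buchi (Stmt (I × Fin n) (C × Fin n) F) Q' where
  q0 := B.q0
  δ := fun q w q' => ∃ (ss : Fin n → Stmt0 (I × Fin n) (C × Fin n) F)
        (l : Set (AP (I × Fin n) (C × Fin n) F)),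
        B.δ q (combine T O ρ υ inps ((List.finRange n).map ss) l) q' ∧
        w.1 = (List.finRange m).map fun j => ss (Fin.castLE hmn j)
  Acc := B.Acc

/-- The formula `∀π₁ … ∀π_m ∃π_{m+1} … ∃π_n. ψ`. -/
def AEform (m n : ℕ) (ψ : TSL (I × Fin n) (C × Fin n) F) : HyperTSL I C F (Fin n) :=
  (List.finRange n).foldr
    (fun (j : Fin n) acc => if (j : ℕ) < m then HyperTSL.all j acc else HyperTSL.ex j acc)
    (.qf ψ)

end TSLMC
/-! ### Reduced and adapted computations -/

namespace TSLMC
open scoped Classical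
variable {V I C F Pi : Type}

/-- The index `ι(t) = B·(t+1) − 3` for blocks of length `B`. -/
def iotaIdx (B t : ℕ) : ℕ := B * (t + 1) - 3

/-- The reduced computation: the combined computation at the indices `ι(t)`,
restricted to the original inputs and cells. -/
def reduceC (B : ℕ) (ζ : ℕ → Assign V Empty (CStar I C)) : ℕ → Assign V I C :=
  fun t x => ζ (iotaIdx B t) (.inr (.inl x.swap))

/-- The reduced computation of trace variable `j`: the combined hyper-computation at
the indices `ι(t)`, restricted to the `j`-indexed inputs and cells, renamed back. -/
def reduceTr {n : ℕ} (B : ℕ) (j : Fin n)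
    (ζ : ℕ → Assign V Empty (CStar (I × Fin n) (C × Fin n))) : ℕ → Assign V I C :=
  fun t x => ζ (iotaIdx B t)
    (.inr (.inl (match x with | .inl i => .inr (i, j) | .inr c => .inl (c, j))))

/-- Assembling a hyper-computation from one computation per trace variable
(`∅[π₁, ζ₁]…[π_n, ζ_n]`). -/
def assembleH {n : ℕ} (red : Fin n → ℕ → Assign V I C) :
    ℕ → Assign V (I × Fin n) (C × Fin n) :=
  fun t x => match x with
  | .inl (i, j) => red j t (.inl i)
  | .inr (c, j) => red j t (.inr c)

/-- The adapted computation `ζ̃` of a computation `ζ`. -/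
noncomputable def adapt (T : Thy V F) (upds : List (C × FTerm I C F)) (inps : List I)
    (init : Assign V I C) (initC : Assign V Empty (CStar I C))
    (ζ : ℕ → Assign V I C) : ℕ → Assign V Empty (CStar I C) := fun idx x =>
  let m := upds.length
  let k := inps.length
  let b := idx / (m + k + 3)
  let i := idx % (m + k + 3)
  let newTmp : ℕ → V := fun p =>
    ((upds[p]?).map fun u => u.2.eval T (prevA init ζ b)).getD (initC (.inr (.inr p)))
  let oldTmp : ℕ → V := fun p =>
    match b with
    | 0 => initC (.inr (.inr p))
    | b' + 1 => ((upds[p]?).map fun u => u.2.eval T (prevA init ζ b')).getD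
        (initC (.inr (.inr p)))
  match x with
  | .inl e => e.elim
  | .inr (.inr p) => if i < m then (if p ≤ i then newTmp p else oldTmp p) else newTmp p
  | .inr (.inl (.inl c)) => if i < m then prevA init ζ b (.inr c) else ζ b (.inr c)
  | .inr (.inl (.inr ii)) =>
      if i < m + 1 then prevA init ζ b (.inl ii)
      else if i ≤ m + k then
        (if inps.idxOf ii < i - m then ζ b (.inl ii) else prevA init ζ b (.inl ii))
      else ζ b (.inl ii)

/-- The adapted hyper-computation of computations `ζ_{π₁}, …, ζ_{π_n}`. -/
noncomputable def hadapt {n : ℕ} (T : Thy V F)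
    (upds : List ((C × Fin n) × FTerm (I × Fin n) (C × Fin n) F))
    (inps : List (I × Fin n)) (init : Assign V I C)
    (initC : Assign V Empty (CStar (I × Fin n) (C × Fin n)))
    (ζs : Fin n → ℕ → Assign V I C) :
    ℕ → Assign V Empty (CStar (I × Fin n) (C × Fin n)) := fun idx x =>
  let m := upds.length
  let k := inps.length
  let b := idx / (m + n + k + 2)
  let i := idx % (m + n + k + 2)
  let ζ' : ℕ → Assign V (I × Fin n) (C × Fin n) := assembleH ζs
  let hinit : Assign V (I × Fin n) (C × Fin n) := liftInit init
  let newTmp : ℕ → V := fun p =>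
    ((upds[p]?).map fun u => u.2.eval T (prevA hinit ζ' b)).getD (initC (.inr (.inr p)))
  let oldTmp : ℕ → V := fun p =>
    match b with
    | 0 => initC (.inr (.inr p))
    | b' + 1 => ((upds[p]?).map fun u => u.2.eval T (prevA hinit ζ' b')).getD
        (initC (.inr (.inr p)))
  match x with
  | .inl e => e.elim
  | .inr (.inr p) => if i < m then (if p ≤ i then newTmp p else oldTmp p) else newTmp p
  | .inr (.inl (.inl cj)) =>
      if i < m then prevA hinit ζ' b (.inr cj)
      else if i < m + n then
        (if (cj.2 : ℕ) < i - m + 1 then ζs cj.2 b (.inr cj.1)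
         else prevA hinit ζ' b (.inr cj))
      else ζ' b (.inr cj)
  | .inr (.inl (.inr ij)) =>
      if i < m + n then prevA hinit ζ' b (.inl ij)
      else if i < m + n + k then
        (if inps.idxOf ij < i - (m + n) + 1 then ζ' b (.inl ij)
         else prevA hinit ζ' b (.inl ij))
      else ζ' b (.inl ij)

/-- The composed trace `σ_t = ((σ_{π₁})_{π₁})_t; … ; ((σ_{π_n})_{π_n})_t`. -/
def composedTrace {n : ℕ} (σs : Fin n → ℕ → Stmt0 I C F) (t : ℕ) :
    List (Stmt0 (I × Fin n) (C × Fin n) F) :=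
  (List.finRange n).map fun j => (σs j t).rename j

/-- The composed trace, as a trace of (nonempty) program statements. -/
def composedStmt {n : ℕ} (hn : 0 < n) (σs : Fin n → ℕ → Stmt0 I C F) (t : ℕ) :
    Stmt (I × Fin n) (C × Fin n) F :=
  ⟨composedTrace σs t, by
    intro h
    have := congrArg List.length h
    simp [composedTrace] at this
    omega⟩

end TSLMC


/-!
Write `B = |𝕀| + |υ| + 3` for the length of `combine(σ_b, X_b)`. Inside the `b`-th block of
`ζ` every cell is written at most once, at a fixed position, its slot: `tmp_j` at `j`, the
program cells (only by `σ_b`) at `|υ|`, the input `i_r` at `|υ| + 1 + r`; the two assertions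
write nothing. Hence just after position `i` a cell holds its value at the end of block `b`
if its slot is at most `i`, and its value at the end of block `b - 1` otherwise. The
end-of-block values are read off `ζ|σ`, which samples `ζ` after the last input of each block:
program cells and inputs are copied, and `tmp_j` holds `τ_{Fj}` evaluated at the previous
reduced step, because the program cells and inputs are untouched before `tmp_j` is saved. The
adapted computation is defined by exactly this case distinction.
-/

namespace TSLMC

open scoped Classical

variable {V I C F : Type}

def Stmt0.Writes : Stmt0 I C F → C → Prop
  | .assert _, _ => False
  | .assign c _, y => c = y
  | .havoc c, y => c = y

section Frame

variable {T : Thy V F} {init : Assign V I C} {ζ : ℕ → Assign V I C} {σ : ℕ → Stmt0 I C F}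

theorem Matches.apply_eq_eval_of_eq_assign (hm : Matches T init ζ σ) {t : ℕ} {c : C}
    {τ : FTerm I C F} (hσ : σ t = .assign c τ) :
    ζ t (.inr c) = τ.eval T (prevA init ζ t) := by
  have := hm t
  rw [matchesAt, hσ] at this
  exact this.1

theorem Matches.apply_eq_prevA_of_not_writes (hm : Matches T init ζ σ) {t : ℕ} {y : C}
    (hy : ¬ (σ t).Writes y) : ζ t (.inr y) = prevA init ζ t (.inr y) := by
  have := hm t
  unfold matchesAt at this
  cases hσ : σ t <;> rw [hσ] at this hy <;> simp only [Stmt0.Writes] at hy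
  · exact this.2 y
  · exact this.2 y (Ne.symm hy)
  · exact this y (Ne.symm hy)

theorem Matches.prevA_eq_of_not_writes (hm : Matches T init ζ σ) {y : C} {a b : ℕ}
    (hab : a ≤ b) (hy : ∀ t, a ≤ t → t < b → ¬ (σ t).Writes y) :
    prevA init ζ b (.inr y) = prevA init ζ a (.inr y) := by
  induction b, hab using Nat.le_induction with
  | base => rfl
  | succ b hab ih =>
    calc prevA init ζ (b + 1) (.inr y) = ζ b (.inr y) := rfl
      _ = prevA init ζ b (.inr y) := hm.apply_eq_prevA_of_not_writes (hy b hab (by omega))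
      _ = prevA init ζ a (.inr y) := ih fun t h1 h2 => hy t h1 (by omega)

end Frame

theorem fpos_eq_of_length_eq {σ : ℕ → Stmt I C F} {L : ℕ} (hL : ∀ t, (σ t).1.length = L)
    (j : ℕ) : fpos σ j = (j / L, j % L) := by
  have hL0 : 0 < L := hL 0 ▸ List.length_pos_iff.mpr (σ 0).2
  induction j with
  | zero => simp [fpos]
  | succ j ih =>
    have hr := Nat.mod_lt j hL0
    have hj := Nat.div_add_mod j L
    simp only [fpos, ih, hL]
    split_ifs with h
    · rw [show j + 1 = L * (j / L) + (j % L + 1) by omega, Nat.mul_add_div hL0,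
        Nat.mul_add_mod, Nat.div_eq_of_lt h, Nat.mod_eq_of_lt h, add_zero]
    · rw [show j + 1 = L * (j / L + 1) by rw [Nat.mul_succ]; omega,
        Nat.mul_div_cancel_left _ hL0, Nat.mul_mod_right]

theorem flatten_mul_add {σ : ℕ → Stmt I C F} {L : ℕ} (hL : ∀ t, (σ t).1.length = L)
    (b : ℕ) {i : ℕ} (hi : i < L) :
    flatten σ (L * b + i) = (σ b).1[i]'(hL b ▸ hi) := by
  have hpos : fpos σ (L * b + i) = (b, i) := by
    rw [fpos_eq_of_length_eq hL, Nat.mul_add_div (by omega), Nat.mul_add_mod,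
      Nat.div_eq_of_lt hi, Nat.mod_eq_of_lt hi, add_zero]
  simp only [flatten, hpos]
  exact List.getD_eq_getElem _ _ _

def restrictAssign (a : Assign V Empty (CStar I C)) : Assign V I C :=
  fun x => a (.inr (.inl x.swap))

theorem FTerm.eval_embed (T : Thy V F) (a : Assign V Empty (CStar I C)) :
    (τ : FTerm I C F) → τ.embed.eval T a = τ.eval T (restrictAssign a)
  | .inp _ => by rw [FTerm.embed, FTerm.eval, FTerm.eval]; rfl
  | .cell _ => by rw [FTerm.embed, FTerm.eval, FTerm.eval]; rfl
  | .app f ts => by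
    rw [FTerm.embed, FTerm.eval, FTerm.eval]
    congr 1
    simp only [List.map_subtype, List.unattach_attach, List.map_map, List.map_inj_left,
      Function.comp_apply]
    exact fun t _ => FTerm.eval_embed T a t
decreasing_by
  have := List.sizeOf_lt_of_mem ‹t ∈ ts›
  simp only [FTerm.app.sizeOf_spec]
  omega

/-- Cells that a block never writes (`tmp_p` with `p ≥ m`) get the block length as slot. -/
noncomputable def writeSlot (m : ℕ) (inps : List I) : CStar I C → ℕ
  | .inl (.inl _) => m
  | .inl (.inr i) => m + 1 + inps.idxOf i
  | .inr p => if p < m then p else inps.length + m + 3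

theorem writeSlot_inl_le {inps : List I} (hinps : ∀ i : I, i ∈ inps) (m : ℕ) (x : C ⊕ I) :
    writeSlot m inps (.inl x) ≤ m + inps.length := by
  rcases x with c | i
  · simp [writeSlot]
  · have := List.idxOf_lt_length_of_mem (hinps i)
    simp only [writeSlot]
    omega

theorem le_writeSlot_inl (m : ℕ) (inps : List I) (x : C ⊕ I) :
    m ≤ writeSlot m inps (.inl x) := by
  rcases x with c | i <;> simp only [writeSlot] <;> omega

section Combine

variable {T : Thy V F} {O : Ops V F T} {ρ : List (FTerm I C F)} {υ : List (C × FTerm I C F)}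
  {inps : List I}

theorem combine_length (s : List (Stmt0 I C F)) (l : Set (AP I C F)) :
    (combine T O ρ υ inps s l).1.length = υ.length + s.length + inps.length + 2 := by
  simp only [combine, List.length_append, List.length_mapIdx, List.length_map,
    List.length_cons, List.length_nil]

theorem combine_getElem_of_lt (s : List (Stmt0 I C F)) (l : Set (AP I C F)) {i : ℕ}
    (hi : i < υ.length) (hi' : i < (combine T O ρ υ inps s l).1.length) :
    (combine T O ρ υ inps s l).1[i] = .assign (.inr i) (υ[i].2.embed) := by
  simp [combine, hi]

theorem eq_writeSlot_of_writes (hnd : inps.Nodup) (s : Stmt0 I C F) (l : Set (AP I C F))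
    {i : ℕ} (hi : i < (combine T O ρ υ inps [s] l).1.length) {y : CStar I C}
    (hw : ((combine T O ρ υ inps [s] l).1[i]).Writes y) :
    i = writeSlot υ.length inps y := by
  simp only [combine, List.getElem_append, List.length_append, List.length_mapIdx,
    List.length_map, List.length_singleton] at hw
  rw [combine_length, List.length_singleton] at hi
  split_ifs at hw with h1 h2 h3
  · simp only [List.getElem_mapIdx, Stmt0.Writes] at hw
    simp [← hw, writeSlot, h3]
  · obtain rfl : i = υ.length := by omega
    cases s <;> simp only [List.map_cons, List.map_nil, Nat.sub_self, List.getElem_cons_zero,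
      Stmt0.embed, Stmt0.Writes] at hw <;> simp [← hw, writeSlot]
  · simp only [List.getElem_map, Stmt0.Writes] at hw
    simp only [← hw, writeSlot, hnd.idxOf_getElem]
    omega
  · obtain ⟨e, he, rfl⟩ : ∃ e < 2, i = υ.length + 1 + inps.length + e :=
      ⟨i - (υ.length + 1 + inps.length), by omega, by omega⟩
    interval_cases e <;> simp [Stmt0.Writes] at hw

end Combine

def blockEnd (T : Thy V F) (υ : List (C × FTerm I C F)) (init : Assign V I C)
    (initC : Assign V Empty (CStar I C)) (ξ : ℕ → Assign V I C) (b : ℕ) :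
    Assign V Empty (CStar I C)
  | .inl e => e.elim
  | .inr (.inl x) => ξ b x.swap
  | .inr (.inr p) =>
    ((υ[p]?).map fun u => u.2.eval T (prevA init ξ b)).getD (initC (.inr (.inr p)))

theorem adapt_mul_add (T : Thy V F) (υ : List (C × FTerm I C F)) (inps : List I)
    (init : Assign V I C) (initC : Assign V Empty (CStar I C))
    (hic : ∀ c : C, initC (.inr (.inl (.inl c))) = init (.inr c))
    (hii : ∀ i : I, initC (.inr (.inl (.inr i))) = init (.inl i))
    (ξ : ℕ → Assign V I C) (b : ℕ) {i : ℕ} (hi : i < inps.length + υ.length + 3)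
    (y : CStar I C) :
    adapt T υ inps init initC ξ ((inps.length + υ.length + 3) * b + i) (.inr y) =
      if writeSlot υ.length inps y ≤ i then blockEnd T υ init initC ξ b (.inr y)
      else prevA initC (blockEnd T υ init initC ξ) b (.inr y) := by
  have hB : υ.length + inps.length + 3 = inps.length + υ.length + 3 := by omega
  have hB0 : 0 < inps.length + υ.length + 3 := by omega
  rcases y with (c | ii) | p <;>
    simp only [adapt, hB, Nat.mul_add_div hB0, Nat.mul_add_mod, Nat.div_eq_of_lt hi,
      Nat.mod_eq_of_lt hi, add_zero, writeSlot, blockEnd]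
  · rcases b with _ | b <;> simp only [prevA.eq_1, prevA.eq_2, hic, blockEnd, Sum.swap_inl] <;>
      split_ifs <;> first | rfl | omega
  · have := List.idxOf_le_length (a := ii) (l := inps)
    rcases b with _ | b <;> simp only [prevA.eq_1, prevA.eq_2, hii, blockEnd, Sum.swap_inr] <;>
      split_ifs <;> first | rfl | omega
  · by_cases hp : p < υ.length
    · rcases b with _ | b <;> simp only [prevA.eq_1, prevA.eq_2, blockEnd, hp, if_true] <;>
        split_ifs <;> first | rfl | omega
    · rcases b with _ | b <;> simp [hp, prevA.eq_1, prevA.eq_2, blockEnd]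

theorem iotaIdx_eq (n b : ℕ) : iotaIdx (n + 3) b = (n + 3) * b + n := by
  rw [iotaIdx, Nat.mul_succ]
  omega

section CombinedComputation

variable {T : Thy V F} {O : Ops V F T} {init : Assign V I C} {initC : Assign V Empty (CStar I C)}
  {ρ : List (FTerm I C F)} {υ : List (C × FTerm I C F)} {inps : List I}
  {σ : ℕ → Stmt0 I C F} {X : ℕ → Set (AP I C F)} {ζ : ℕ → Assign V Empty (CStar I C)}

theorem flatten_combine (b : ℕ) {i : ℕ} (hi : i < inps.length + υ.length + 3) :
    flatten (fun t => combine T O ρ υ inps [σ t] (X t)) ((inps.length + υ.length + 3) * b + i) =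
      (combine T O ρ υ inps [σ b] (X b)).1[i]'(by
        simp only [combine_length, List.length_singleton]; omega) :=
  flatten_mul_add (fun t => by simp only [combine_length, List.length_singleton]; omega) b hi

theorem prevA_block_eq (hnd : inps.Nodup)
    (hM : MatchesC T initC ζ (fun t => combine T O ρ υ inps [σ t] (X t)))
    (b : ℕ) {lo hi : ℕ} (hlo : lo ≤ hi) (hhi : hi ≤ inps.length + υ.length + 3)
    {y : CStar I C}
    (hy : ¬ (lo ≤ writeSlot υ.length inps y ∧ writeSlot υ.length inps y < hi)) :
    prevA initC ζ ((inps.length + υ.length + 3) * b + hi) (.inr y) =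
      prevA initC ζ ((inps.length + υ.length + 3) * b + lo) (.inr y) := by
  refine hM.prevA_eq_of_not_writes (by omega) fun t h1 h2 hw => ?_
  obtain ⟨i, rfl⟩ : ∃ i, t = (inps.length + υ.length + 3) * b + i :=
    ⟨t - (inps.length + υ.length + 3) * b, by omega⟩
  rw [flatten_combine b (by omega)] at hw
  have := eq_writeSlot_of_writes hnd _ _ _ hw
  omega

theorem prevA_block_frame (hnd : inps.Nodup)
    (hM : MatchesC T initC ζ (fun t => combine T O ρ υ inps [σ t] (X t)))
    (b : ℕ) {j : ℕ} (hj : j ≤ inps.length + υ.length + 3) (y : CStar I C) :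
    prevA initC ζ ((inps.length + υ.length + 3) * b + j) (.inr y) =
      if writeSlot υ.length inps y < j then
        prevA initC ζ ((inps.length + υ.length + 3) * (b + 1)) (.inr y)
      else prevA initC ζ ((inps.length + υ.length + 3) * b) (.inr y) := by
  rw [Nat.mul_succ]
  split_ifs with h
  · exact (prevA_block_eq hnd hM b hj le_rfl (by omega)).symm
  · exact prevA_block_eq hnd hM b (Nat.zero_le j) hj (by omega)

theorem prevA_block_end_inl (hinps : ∀ i : I, i ∈ inps) (hnd : inps.Nodup)
    (hM : MatchesC T initC ζ (fun t => combine T O ρ υ inps [σ t] (X t)))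
    (b : ℕ) (x : C ⊕ I) :
    prevA initC ζ ((inps.length + υ.length + 3) * (b + 1)) (.inr (.inl x)) =
      reduceC (inps.length + υ.length + 3) ζ b x.swap := by
  have := writeSlot_inl_le hinps υ.length x
  calc _ = prevA initC ζ ((inps.length + υ.length + 3) * b + (inps.length + υ.length) + 1)
        (.inr (.inl x)) := by
          rw [Nat.mul_succ]
          exact prevA_block_eq hnd hM b (lo := inps.length + υ.length + 1) (by omega) le_rfl
            (by omega)
    _ = _ := by rw [reduceC, iotaIdx_eq, Sum.swap_swap]; rfl

theorem prevA_block_start_inl (hic : ∀ c : C, initC (.inr (.inl (.inl c))) = init (.inr c))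
    (hii : ∀ i : I, initC (.inr (.inl (.inr i))) = init (.inl i)) (hinps : ∀ i : I, i ∈ inps)
    (hnd : inps.Nodup) (hM : MatchesC T initC ζ (fun t => combine T O ρ υ inps [σ t] (X t)))
    (b : ℕ) (x : C ⊕ I) :
    prevA initC ζ ((inps.length + υ.length + 3) * b) (.inr (.inl x)) =
      prevA init (reduceC (inps.length + υ.length + 3) ζ) b x.swap := by
  rcases b with _ | b
  · rcases x with c | i
    · exact hic c
    · exact hii i
  · exact prevA_block_end_inl hinps hnd hM b x

theorem restrictAssign_prevA_block (hic : ∀ c : C, initC (.inr (.inl (.inl c))) = init (.inr c))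
    (hii : ∀ i : I, initC (.inr (.inl (.inr i))) = init (.inl i)) (hinps : ∀ i : I, i ∈ inps)
    (hnd : inps.Nodup) (hM : MatchesC T initC ζ (fun t => combine T O ρ υ inps [σ t] (X t)))
    (b : ℕ) {p : ℕ} (hp : p ≤ υ.length) :
    restrictAssign (prevA initC ζ ((inps.length + υ.length + 3) * b + p)) =
      prevA init (reduceC (inps.length + υ.length + 3) ζ) b := by
  funext x
  have := le_writeSlot_inl υ.length inps x.swap
  rw [restrictAssign, prevA_block_eq hnd hM b (Nat.zero_le p) (by omega) (by omega),
    Nat.add_zero, prevA_block_start_inl hic hii hinps hnd hM, Sum.swap_swap]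

theorem prevA_block_end_inr (hic : ∀ c : C, initC (.inr (.inl (.inl c))) = init (.inr c))
    (hii : ∀ i : I, initC (.inr (.inl (.inr i))) = init (.inl i)) (hinps : ∀ i : I, i ∈ inps)
    (hnd : inps.Nodup) (hM : MatchesC T initC ζ (fun t => combine T O ρ υ inps [σ t] (X t)))
    (b p : ℕ) :
    prevA initC ζ ((inps.length + υ.length + 3) * (b + 1)) (.inr (.inr p)) =
      ((υ[p]?).map fun u =>
        u.2.eval T (prevA init (reduceC (inps.length + υ.length + 3) ζ) b)).getD
          (initC (.inr (.inr p))) := by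
  by_cases hp : p < υ.length
  · rw [List.getElem?_eq_getElem hp, Option.map_some, Option.getD_some]
    calc _ = prevA initC ζ ((inps.length + υ.length + 3) * b + p + 1) (.inr (.inr p)) := by
          rw [Nat.mul_succ]
          exact prevA_block_eq hnd hM b (lo := p + 1) (by omega) le_rfl (by simp [writeSlot, hp])
      _ = υ[p].2.embed.eval T (prevA initC ζ ((inps.length + υ.length + 3) * b + p)) :=
          hM.apply_eq_eval_of_eq_assign
            ((flatten_combine b (by omega)).trans (combine_getElem_of_lt _ _ hp _))
      _ = _ := by rw [FTerm.eval_embed, restrictAssign_prevA_block hic hii hinps hnd hM b hp.le]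
  · rw [List.getElem?_eq_none (not_lt.mp hp), Option.map_none, Option.getD_none]
    have hslot : writeSlot υ.length inps (.inr p : CStar I C) = inps.length + υ.length + 3 := by
      simp [writeSlot, hp]
    induction b with
    | zero => exact prevA_block_eq hnd hM 0 (Nat.zero_le _) le_rfl (by omega)
    | succ b ih =>
      rw [Nat.mul_succ, prevA_block_eq hnd hM (b + 1) (Nat.zero_le _) le_rfl (by omega),
        Nat.add_zero, ih]

theorem prevA_block_end (hic : ∀ c : C, initC (.inr (.inl (.inl c))) = init (.inr c))
    (hii : ∀ i : I, initC (.inr (.inl (.inr i))) = init (.inl i)) (hinps : ∀ i : I, i ∈ inps)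
    (hnd : inps.Nodup) (hM : MatchesC T initC ζ (fun t => combine T O ρ υ inps [σ t] (X t)))
    (b : ℕ) :
    prevA initC ζ ((inps.length + υ.length + 3) * (b + 1)) =
      blockEnd T υ init initC (reduceC (inps.length + υ.length + 3) ζ) b := by
  funext y
  rcases y with e | x | p
  · exact e.elim
  · exact prevA_block_end_inl hinps hnd hM b x
  · exact prevA_block_end_inr hic hii hinps hnd hM b p

theorem prevA_block_start (hic : ∀ c : C, initC (.inr (.inl (.inl c))) = init (.inr c))
    (hii : ∀ i : I, initC (.inr (.inl (.inr i))) = init (.inl i)) (hinps : ∀ i : I, i ∈ inps)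
    (hnd : inps.Nodup) (hM : MatchesC T initC ζ (fun t => combine T O ρ υ inps [σ t] (X t)))
    (b : ℕ) :
    prevA initC ζ ((inps.length + υ.length + 3) * b) =
      prevA initC (blockEnd T υ init initC (reduceC (inps.length + υ.length + 3) ζ)) b := by
  rcases b with _ | b
  · rfl
  · exact prevA_block_end hic hii hinps hnd hM b

end CombinedComputation

theorem eq_adapt_of_reduce
    {V I C F : Type} (T : Thy V F) (O : Ops V F T)
    (init : Assign V I C) (initC : Assign V Empty (CStar I C))
    (hic : ∀ c : C, initC (.inr (.inl (.inl c))) = init (.inr c))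
    (hii : ∀ i : I, initC (.inr (.inl (.inr i))) = init (.inl i))
    (ρ : List (FTerm I C F)) (υ : List (C × FTerm I C F))
    (inps : List I) (hinps : ∀ i : I, i ∈ inps) (hnd : inps.Nodup)
    (σ : ℕ → Stmt0 I C F) (X : ℕ → Set (AP I C F))
    (ζ : ℕ → Assign V Empty (CStar I C))
    (h : MatchesC T initC ζ (fun t => combine T O ρ υ inps [σ t] (X t))) :
    ζ = adapt T υ inps init initC (reduceC (inps.length + υ.length + 3) ζ) := by
  funext n y
  rcases y with e | y
  · exact e.elim
  set B := inps.length + υ.length + 3 with hB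
  obtain ⟨b, i, hi, rfl⟩ : ∃ b i, i < B ∧ n = B * b + i :=
    ⟨n / B, n % B, Nat.mod_lt _ (by omega), (Nat.div_add_mod n B).symm⟩
  calc ζ (B * b + i) (.inr y) = prevA initC ζ (B * b + (i + 1)) (.inr y) := rfl
    _ = if writeSlot υ.length inps y < i + 1 then prevA initC ζ (B * (b + 1)) (.inr y)
        else prevA initC ζ (B * b) (.inr y) := prevA_block_frame hnd h b hi y
    _ = adapt T υ inps init initC (reduceC B ζ) (B * b + i) (.inr y) := by
      rw [adapt_mul_add T υ inps init initC hic hii _ b hi, prevA_block_end hic hii hinps hnd h,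
        prevA_block_start hic hii hinps hnd h]
      simp only [Nat.lt_succ_iff, hB]

end TSLMC
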